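/- For a qubit with PVMs Z = {|0⟩⟨0|, |1⟩⟨1|} and X = {|x̄⟩⟨x̄|}_{x∈{0,1}} (the conjugate basis), every density operator ρ satisfies max_z tr(ρ Z_z) + max_x tr(ρ X_x) ≤ 1 + 1/√2. -/

import Mathlib

open scoped ComplexOrder

/-- Operator norm of a matrix, viewed as an operator on Euclidean space. -/
noncomputable def opNorm {N : ℕ} (A : Matrix (Fin N) (Fin N) ℂ) : ℝ :=
  ‖Matrix.toEuclideanCLM (𝕜 := ℂ) A‖

/-- An orthogonal projection. -/
def IsProjection {N : ℕ} (A : Matrix (Fin N) (Fin N) ℂ) : Prop :=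
  A.IsHermitian ∧ A * A = A

/-- A density operator: positive semidefinite with trace one. -/
def IsDensity {N : ℕ} (ρ : Matrix (Fin N) (Fin N) ℂ) : Prop :=
  ρ.PosSemidef ∧ ρ.trace = 1

/-- The computational-basis PVM Z on a qubit: Z_0 = |0⟩⟨0|, Z_1 = |1⟩⟨1|. -/
def qubitZ : Fin 2 → Matrix (Fin 2) (Fin 2) ℂ :=
  fun z => !![if z = 0 then 1 else 0, 0; 0, if z = 1 then 1 else 0]

/-- The conjugate-basis PVM X on a qubit: X_x = |x̄⟩⟨x̄| with
    |0̄⟩ = (|0⟩+|1⟩)/√2, |1̄⟩ = (|0⟩−|1⟩)/√2. -/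
noncomputable def qubitX : Fin 2 → Matrix (Fin 2) (Fin 2) ℂ :=
  fun x => !![1/2, if x = 0 then 1/2 else -(1/2);
              if x = 0 then 1/2 else -(1/2), 1/2]

/-!
The Z-outcome probabilities are the diagonal entries `a, d` of `ρ`, and the X-outcome
probabilities are `1/2 ± r` with `r = Re ρ₀₁`. Positivity of `det ρ` gives
`r² ≤ |ρ₀₁|² ≤ a d = 1/4 - (a - 1/2)²`, so the point `(a - 1/2, r)` lies in the disc of
radius `1/2`, on which `|x| + |y|` is at most `1/√2`.
-/

theorem abs_add_abs_le_sqrt_two_mul (x y : ℝ) : |x| + |y| ≤ √(2 * (x ^ 2 + y ^ 2)) := by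
  refine (le_abs_self _).trans (Real.abs_le_sqrt ?_)
  nlinarith [sq_abs x, sq_abs y, sq_nonneg (|x| - |y|)]

theorem max_add_max_le_one_add_inv_sqrt_two {a d r : ℝ} (had : a + d = 1) (hr : r ^ 2 ≤ a * d) :
    max a d + max (1 / 2 + r) (1 / 2 - r) ≤ 1 + 1 / √2 := by
  obtain rfl : d = 1 - a := by linarith
  have hmax_ad : max a (1 - a) = 1 / 2 + |a - 1 / 2| := by
    rcases abs_cases (a - 1 / 2) with ⟨h, _⟩ | ⟨h, _⟩ <;>
      rcases max_cases a (1 - a) with ⟨h', _⟩ | ⟨h', _⟩ <;> linarith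
  have hmax_r : max (1 / 2 + r) (1 / 2 - r) = 1 / 2 + |r| := by
    rw [sub_eq_add_neg, max_add_add_left, abs_eq_max_neg]
  have hdisc : (a - 1 / 2) ^ 2 + r ^ 2 ≤ 1 / 4 := by nlinarith
  calc max a (1 - a) + max (1 / 2 + r) (1 / 2 - r) = 1 + (|a - 1 / 2| + |r|) := by
        rw [hmax_ad, hmax_r]; ring
    _ ≤ 1 + √(2 * (1 / 4)) := by
        gcongr
        exact (abs_add_abs_le_sqrt_two_mul _ _).trans (Real.sqrt_le_sqrt (by linarith))
    _ = 1 + 1 / √2 := by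
        rw [show (2 : ℝ) * (1 / 4) = 2⁻¹ by norm_num, Real.sqrt_inv, one_div]

theorem Matrix.PosSemidef.normSq_apply_zero_one_le {ρ : Matrix (Fin 2) (Fin 2) ℂ}
    (hρ : ρ.PosSemidef) : Complex.normSq (ρ 0 1) ≤ (ρ 0 0).re * (ρ 1 1).re := by
  have hdet : 0 ≤ ρ.det.re := (Complex.nonneg_iff.mp hρ.det_nonneg).1
  have h10 : ρ 1 0 = star (ρ 0 1) := (hρ.isHermitian.apply 1 0).symm
  have hdiag (i : Fin 2) : (ρ i i).im = 0 := (Complex.nonneg_iff.mp hρ.diag_nonneg).2.symm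
  rw [Matrix.det_fin_two, h10] at hdet
  simpa [Complex.normSq_apply, Complex.star_def, hdiag, sub_nonneg] using hdet

theorem trace_mul_qubitZ (ρ : Matrix (Fin 2) (Fin 2) ℂ) (z : Fin 2) :
    (ρ * qubitZ z).trace = ρ z z := by
  fin_cases z <;> simp [qubitZ, Matrix.trace_fin_two, Matrix.mul_apply]

theorem trace_mul_qubitX_zero (ρ : Matrix (Fin 2) (Fin 2) ℂ) :
    (ρ * qubitX 0).trace = (ρ.trace + (ρ 0 1 + ρ 1 0)) / 2 := by
  simp [qubitX, Matrix.trace_fin_two, Matrix.mul_apply]; ring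

theorem trace_mul_qubitX_one (ρ : Matrix (Fin 2) (Fin 2) ℂ) :
    (ρ * qubitX 1).trace = (ρ.trace - (ρ 0 1 + ρ 1 0)) / 2 := by
  simp [qubitX, Matrix.trace_fin_two, Matrix.mul_apply]; ring

/-- Landau–Pollak relation for a qubit:
    max_z tr(ρZ_z) + max_x tr(ρX_x) ≤ 1 + 1/√2. -/
theorem qubit_landau_pollak (ρ : Matrix (Fin 2) (Fin 2) ℂ) (hρ : IsDensity ρ) :
    max ((ρ * qubitZ 0).trace).re ((ρ * qubitZ 1).trace).re +
      max ((ρ * qubitX 0).trace).re ((ρ * qubitX 1).trace).re ≤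
      1 + 1 / Real.sqrt 2 := by
  obtain ⟨hpsd, htr⟩ := hρ
  have hsum : ρ 0 1 + ρ 1 0 = 2 * (ρ 0 1).re := by
    rw [← hpsd.isHermitian.apply 1 0, Complex.star_def, Complex.add_conj]; norm_cast
  have hX0 : (ρ * qubitX 0).trace.re = 1 / 2 + (ρ 0 1).re := by
    simp [trace_mul_qubitX_zero, htr, hsum]; ring
  have hX1 : (ρ * qubitX 1).trace.re = 1 / 2 - (ρ 0 1).re := by
    simp [trace_mul_qubitX_one, htr, hsum]; ring
  have hdiag : (ρ 0 0).re + (ρ 1 1).re = 1 := by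
    simpa [Matrix.trace_fin_two] using congrArg Complex.re htr
  have hoff : (ρ 0 1).re ^ 2 ≤ (ρ 0 0).re * (ρ 1 1).re :=
    (sq _).trans_le (Complex.re_sq_le_normSq _) |>.trans hpsd.normSq_apply_zero_one_le
  rw [trace_mul_qubitZ, trace_mul_qubitZ, hX0, hX1]
  exact max_add_max_le_one_add_inv_sqrt_two hdiag hoff
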